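/- Assume hᵢ > 0 for all i ∈ {1,…,n} and 0 < γᵢ < 1 for all i ∈ {1,…,n−1}. Set p_k := 1/(α_{n,k+1} − α_{n,k}) for 1 ≤ k ≤ n−1 and a(h,γ) := max( (α_{n,2}/α_{n,1} + 1)·p₁ , 2·max_{1≤k≤n−2}(p_k + p_{k+1}) , max_{1≤i≤n}(α_{n,i}hᵢ)⁻¹ ) (where the middle term is omitted when n = 2). Then S⁰_x(h,γ) is positive definite, its inverse satisfies λ_max((S⁰_x(h,γ))⁻¹) ≤ a(h,γ), and consequently λ_min(S⁰_x(h,γ)) ≥ 1/a(h,γ). -/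

import Mathlib

/-!
`ΔΓ` is the matrix `(α_{n,min(i,j)})_{i,j}`, which factors as `Uᵀ D U` with `U` the upper
triangular all-ones matrix and `D = diag(α_{n,k} - α_{n,k-1})` (with `α_{n,0} = 0`), positive since
the densities increase. Hence `S⁰` is positive definite, and `(ΔΓ)⁻¹ = C D⁻¹ Cᵀ` with `C = U⁻¹`
bidiagonal. The absolute row sums of `C D⁻¹ Cᵀ` are at most `(1 or 2)·p_{k-1} + 2 p_k`
(with `p_0 = 1/α_{n,1}` and `p_n = 0`), and those of
the other two (diagonal) blocks of `S⁰⁻¹` are `(α_{n,i} hᵢ)⁻¹`; all are bounded by `a(h,γ)`, which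
therefore bounds the Rayleigh quotient of the symmetric matrix `S⁰⁻¹`. Cauchy–Schwarz for the form
of `S⁰` turns this into `λ_min(S⁰) ≥ 1/a(h,γ)`.
-/

open Matrix

namespace MLSW6

noncomputable def alpha (n : ℕ) (ρ : Fin n → ℝ) (i k : Fin n) : ℝ :=
  if k < i then ρ k / ρ i else 1

noncomputable def Gam (n : ℕ) (ρ : Fin n → ℝ) : Matrix (Fin n) (Fin n) ℝ :=
  Matrix.of (alpha n ρ)

/-- `α_{n,i}`. -/
noncomputable def alphaN (n : ℕ) (ρ : Fin n → ℝ) (i : Fin n) : ℝ :=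
  if h : n - 1 < n then alpha n ρ ⟨n - 1, h⟩ i else 1

noncomputable def Delta (n : ℕ) (ρ : Fin n → ℝ) : Matrix (Fin n) (Fin n) ℝ :=
  Matrix.diagonal (alphaN n ρ)

/-- The density ratio `γᵢ = ρᵢ/ρᵢ₊₁`. -/
noncomputable def gam (n : ℕ) (ρ : Fin n → ℝ) (i : Fin (n - 1)) : ℝ :=
  ρ ⟨i.val, by have := i.isLt; omega⟩ / ρ ⟨i.val + 1, by have := i.isLt; omega⟩

/-- A 3×3 block matrix with n×n blocks, rows `[[A,B,C],[D,E,F],[G,H,K]]`. -/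
def blk3 {n : ℕ} (A B C D E F G H K : Matrix (Fin n) (Fin n) ℝ) :
    Matrix (Fin n ⊕ Fin n ⊕ Fin n) (Fin n ⊕ Fin n ⊕ Fin n) ℝ :=
  Matrix.fromBlocks A (Matrix.fromCols B C) (Matrix.fromRows D G)
    (Matrix.fromBlocks E F H K)

/-- `S⁰_x(h,γ) = diag(ΔΓ, ΔH, ΔH)`. -/
noncomputable def S0 (n : ℕ) (ρ : Fin n → ℝ) (h : Fin n → ℝ) :
    Matrix (Fin n ⊕ Fin n ⊕ Fin n) (Fin n ⊕ Fin n ⊕ Fin n) ℝ :=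
  blk3 (Delta n ρ * Gam n ρ) 0 0
    0 (Delta n ρ * Matrix.diagonal h) 0
    0 0 (Delta n ρ * Matrix.diagonal h)

/-- `p_k := 1/(α_{n,k+1} − α_{n,k})` (0-indexed). -/
noncomputable def pden (n : ℕ) (ρ : Fin n → ℝ) (k : ℕ) : ℝ :=
  if hk : k + 1 < n then
    1 / (alphaN n ρ ⟨k + 1, hk⟩ - alphaN n ρ ⟨k, by omega⟩)
  else 0

/-- The quantity `a(h,γ)`: the maximum of `(α_{n,2}/α_{n,1} + 1)p₁`,
`2·max_k (p_k + p_{k+1})` (omitted when `n = 2`: the supremum over the empty type is `0`,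
which does not affect the maximum of positive quantities), and `max_i (α_{n,i}hᵢ)⁻¹`. -/
noncomputable def aval (n : ℕ) (hn : 2 ≤ n) (ρ h : Fin n → ℝ) : ℝ :=
  max
    (max ((alphaN n ρ ⟨1, by omega⟩ / alphaN n ρ ⟨0, by omega⟩ + 1) * pden n ρ 0)
      (⨆ k : Fin (n - 2), 2 * (pden n ρ k.val + pden n ρ (k.val + 1))))
    (⨆ i : Fin n, (alphaN n ρ i * h i)⁻¹)

/-- Smallest eigenvalue: infimum of the Rayleigh quotient over the unit sphere. -/
noncomputable def lamMin {m : Type*} [Fintype m] (M : Matrix m m ℝ) : ℝ :=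
  ⨅ x : {x : m → ℝ // x ⬝ᵥ x = 1}, x.1 ⬝ᵥ M.mulVec x.1

/-- Largest eigenvalue: supremum of the Rayleigh quotient over the unit sphere. -/
noncomputable def lamMax {m : Type*} [Fintype m] (M : Matrix m m ℝ) : ℝ :=
  ⨆ x : {x : m → ℝ // x ⬝ᵥ x = 1}, x.1 ⬝ᵥ M.mulVec x.1

section Blocks
variable {m m' R : Type*} [Fintype m] [Fintype m']

theorem _root_.Matrix.dotProduct_fromBlocks_zero_mulVec [NonUnitalNonAssocSemiring R]
    (A : Matrix m m R) (D : Matrix m' m' R) (x y : m ⊕ m' → R) :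
    x ⬝ᵥ fromBlocks A 0 0 D *ᵥ y =
      (x ∘ Sum.inl) ⬝ᵥ A *ᵥ (y ∘ Sum.inl) + (x ∘ Sum.inr) ⬝ᵥ D *ᵥ (y ∘ Sum.inr) := by
  simp [fromBlocks_mulVec, dotProduct, Fintype.sum_sum_type]

theorem _root_.Matrix.PosDef.fromBlocks_zero [Ring R] [PartialOrder R] [StarRing R]
    [IsOrderedAddMonoid R] {A : Matrix m m R} {D : Matrix m' m' R}
    (hA : A.PosDef) (hD : D.PosDef) : (fromBlocks A 0 0 D).PosDef := by
  refine .of_dotProduct_mulVec_pos (hA.isHermitian.fromBlocks (by simp) hD.isHermitian)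
    fun x hx => ?_
  rw [dotProduct_fromBlocks_zero_mulVec]
  have hA' := (posSemidef_iff_dotProduct_mulVec.mp hA.posSemidef).2 (x ∘ Sum.inl)
  have hD' := (posSemidef_iff_dotProduct_mulVec.mp hD.posSemidef).2 (x ∘ Sum.inr)
  by_cases hl : x ∘ Sum.inl = 0
  · have hr : x ∘ Sum.inr ≠ 0 := fun hr => hx (by rw [← Sum.elim_comp_inl_inr x, hl, hr]; simp)
    exact add_pos_of_nonneg_of_pos hA' (hD.dotProduct_mulVec_pos hr)
  · exact add_pos_of_pos_of_nonneg (hA.dotProduct_mulVec_pos hl) hD'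

theorem _root_.Matrix.inv_fromBlocks_zero [CommRing R] [DecidableEq m] [DecidableEq m']
    {A : Matrix m m R} {D : Matrix m' m' R} (hA : IsUnit A) (hD : IsUnit D) :
    (fromBlocks A 0 0 D)⁻¹ = fromBlocks A⁻¹ 0 0 D⁻¹ := by
  simp [inv_fromBlocks_zero₂₁_of_isUnit_iff A 0 D (iff_of_true hA hD)]

theorem _root_.Matrix.inv_transpose_mul_mul_eq [CommRing R] [DecidableEq m]
    {U C D D' : Matrix m m R} (hCU : C * U = 1) (hD : D * D' = 1) :
    (Uᵀ * D * U)⁻¹ = C * D' * Cᵀ := by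
  refine inv_eq_right_inv ?_
  calc Uᵀ * D * U * (C * D' * Cᵀ) = Uᵀ * (D * (U * C) * D') * Cᵀ := by
        simp only [Matrix.mul_assoc]
    _ = 1 := by
        rw [mul_eq_one_comm.mp hCU, Matrix.mul_one, hD, Matrix.mul_one, ← transpose_mul, hCU,
          transpose_one]

theorem _root_.Matrix.inv_diagonal_of_ne_zero {K : Type*} [Field K] [DecidableEq m] {d : m → K}
    (hd : ∀ i, d i ≠ 0) : (diagonal d)⁻¹ = diagonal fun i => (d i)⁻¹ := by
  refine inv_eq_right_inv ?_
  rw [diagonal_mul_diagonal, ← diagonal_one]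
  exact congrArg diagonal (funext fun i => mul_inv_cancel₀ (hd i))

theorem _root_.Matrix.dotProduct_fromBlocks_zero_mulVec_le {A : Matrix m m ℝ}
    {D : Matrix m' m' ℝ} {c : ℝ} (hA : ∀ x, x ⬝ᵥ A *ᵥ x ≤ c * (x ⬝ᵥ x))
    (hD : ∀ x, x ⬝ᵥ D *ᵥ x ≤ c * (x ⬝ᵥ x)) (x : m ⊕ m' → ℝ) :
    x ⬝ᵥ fromBlocks A 0 0 D *ᵥ x ≤ c * (x ⬝ᵥ x) := by
  have hsplit : x ⬝ᵥ x = (x ∘ Sum.inl) ⬝ᵥ (x ∘ Sum.inl) + (x ∘ Sum.inr) ⬝ᵥ (x ∘ Sum.inr) := by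
    simp [dotProduct, Fintype.sum_sum_type]
  rw [dotProduct_fromBlocks_zero_mulVec, hsplit, mul_add]
  exact add_le_add (hA _) (hD _)

end Blocks

section QuadraticForms
variable {m : Type*} [Fintype m]

theorem _root_.Matrix.IsSymm.dotProduct_mulVec_le_of_sum_abs_le {T : Matrix m m ℝ}
    (hT : T.IsSymm) {c : ℝ} (hc : ∀ i, ∑ j, |T i j| ≤ c) (x : m → ℝ) :
    x ⬝ᵥ T *ᵥ x ≤ c * (x ⬝ᵥ x) := by
  have hswap : ∑ i, ∑ j, |T i j| * x j ^ 2 = ∑ i, ∑ j, |T i j| * x i ^ 2 := by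
    rw [Finset.sum_comm]
    simp_rw [hT.apply]
  calc x ⬝ᵥ T *ᵥ x = ∑ i, ∑ j, x i * T i j * x j := by
        simp [dotProduct, mulVec, Finset.mul_sum, mul_assoc]
    _ ≤ ∑ i, ∑ j, (|T i j| * x i ^ 2 + |T i j| * x j ^ 2) / 2 := by
        gcongr with i _ j _
        have h1 : x i * T i j * x j ≤ |T i j| * (|x i| * |x j|) :=
          (le_abs_self _).trans_eq (by rw [abs_mul, abs_mul]; ring)
        nlinarith [abs_nonneg (T i j), sq_nonneg (|x i| - |x j|), sq_abs (x i), sq_abs (x j)]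
    _ = ∑ i, (∑ j, |T i j|) * x i ^ 2 := by
        simp only [← Finset.sum_div, Finset.sum_add_distrib, hswap, Finset.sum_mul]
        ring
    _ ≤ ∑ i, c * x i ^ 2 := by gcongr with i; exact hc i
    _ = c * (x ⬝ᵥ x) := by simp [dotProduct, Finset.mul_sum, sq]

theorem _root_.Matrix.dotProduct_diagonal_mulVec_le [DecidableEq m] {d : m → ℝ} {c : ℝ}
    (hd : ∀ i, d i ≤ c) (x : m → ℝ) : x ⬝ᵥ diagonal d *ᵥ x ≤ c * (x ⬝ᵥ x) := by
  simp only [dotProduct, mulVec_diagonal, Finset.mul_sum]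
  exact Finset.sum_le_sum fun i _ => by nlinarith [hd i, mul_self_nonneg (x i)]

theorem _root_.Matrix.PosSemidef.sq_dotProduct_mulVec_le {S : Matrix m m ℝ} (hS : S.PosSemidef)
    (x y : m → ℝ) : (x ⬝ᵥ S *ᵥ y) ^ 2 ≤ (x ⬝ᵥ S *ᵥ x) * (y ⬝ᵥ S *ᵥ y) := by
  let _ := S.toSeminormedAddCommGroup hS
  let _ := S.toInnerProductSpace hS
  have hinner : ∀ u v : m → ℝ, @inner ℝ _ _ u v = u ⬝ᵥ S *ᵥ v := fun u v => by
    change (S *ᵥ v) ⬝ᵥ star u = _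
    simp [dotProduct_comm]
  have h := real_inner_mul_inner_self_le x y
  rw [hinner, hinner, hinner] at h
  nlinarith [abs_mul_abs_self (x ⬝ᵥ S *ᵥ y)]

/-- By Cauchy–Schwarz for the form of `S`, `|x|⁴ = (x ⬝ S (S⁻¹ x))² ≤ (x ⬝ S x) (x ⬝ S⁻¹ x)`. -/
theorem _root_.Matrix.PosDef.dotProduct_le_mul_dotProduct_mulVec [DecidableEq m]
    {S : Matrix m m ℝ} (hS : S.PosDef) {a : ℝ} (ha : 0 < a)
    (hinv : ∀ x, x ⬝ᵥ S⁻¹ *ᵥ x ≤ a * (x ⬝ᵥ x)) (x : m → ℝ) :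
    x ⬝ᵥ x ≤ a * (x ⬝ᵥ S *ᵥ x) := by
  have hSS : S *ᵥ (S⁻¹ *ᵥ x) = x := by
    rw [mulVec_mulVec, mul_nonsing_inv _ ((isUnit_iff_isUnit_det S).mp hS.isUnit), one_mulVec]
  have hcs := hS.posSemidef.sq_dotProduct_mulVec_le x (S⁻¹ *ᵥ x)
  rw [hSS, dotProduct_comm (S⁻¹ *ᵥ x)] at hcs
  have hq : 0 ≤ x ⬝ᵥ S *ᵥ x := by simpa using hS.posSemidef.dotProduct_mulVec_nonneg x
  have hr : 0 ≤ x ⬝ᵥ x := by simpa using dotProduct_star_self_nonneg x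
  rcases hr.eq_or_lt with hr0 | hrpos
  · rw [← hr0]; positivity
  · refine le_of_mul_le_mul_right ?_ hrpos
    nlinarith [mul_le_mul_of_nonneg_left (hinv x) hq]

end QuadraticForms

section RayleighBounds
variable {m : Type*} [Fintype m]

theorem lamMax_le {M : Matrix m m ℝ} {c : ℝ} (hc : 0 ≤ c)
    (h : ∀ x, x ⬝ᵥ M *ᵥ x ≤ c * (x ⬝ᵥ x)) : lamMax M ≤ c :=
  Real.iSup_le (fun x => (h x.1).trans_eq (by rw [x.2, mul_one])) hc

theorem le_lamMin [Nonempty m] {M : Matrix m m ℝ} {c : ℝ}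
    (h : ∀ x, c * (x ⬝ᵥ x) ≤ x ⬝ᵥ M *ᵥ x) : c ≤ lamMin M := by
  classical
  obtain ⟨i⟩ := ‹Nonempty m›
  have : Nonempty {x : m → ℝ // x ⬝ᵥ x = 1} := ⟨⟨Pi.single i 1, by simp⟩⟩
  exact le_ciInf fun x => (h x.1).trans_eq' (by rw [x.2, mul_one])

end RayleighBounds

section Bidiagonal
variable {n : ℕ}

def upperOnes (n : ℕ) : Matrix (Fin n) (Fin n) ℝ :=
  of fun k j => if (k : ℕ) ≤ j then 1 else 0

def forwardDiff (n : ℕ) : Matrix (Fin n) (Fin n) ℝ :=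
  of fun i k => (if (k : ℕ) = i then 1 else 0) - if (k : ℕ) = i + 1 then 1 else 0

theorem sum_fin_ite_val_eq {M : Type*} [AddCommMonoid M] (c : ℕ) (f : ℕ → M) :
    ∑ k : Fin n, (if (k : ℕ) = c then f k else 0) = if c < n then f c else 0 := by
  rw [Fin.sum_univ_eq_sum_range (fun k => if k = c then f k else 0), Finset.sum_ite_eq']
  simp

theorem forwardDiff_mul_upperOnes : forwardDiff n * upperOnes n = 1 := by
  ext i j
  simp only [mul_apply, forwardDiff, upperOnes, of_apply, sub_mul, ite_mul, one_mul, zero_mul,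
    Finset.sum_sub_distrib, one_apply, Fin.ext_iff]
  rw [sum_fin_ite_val_eq _ (fun k => if k ≤ (j : ℕ) then 1 else 0),
    sum_fin_ite_val_eq _ (fun k => if k ≤ (j : ℕ) then 1 else 0)]
  split_ifs <;> first | omega | norm_num

theorem upperOnes_transpose_mul_diagonal_mul_apply (d : ℕ → ℝ) (i j : Fin n) :
    ((upperOnes n)ᵀ * diagonal (fun k : Fin n => d k) * upperOnes n) i j =
      ∑ k ∈ Finset.range (min (i : ℕ) j + 1), d k := by
  have hm : min (i : ℕ) j < n := by omega
  calc _ = ∑ k : Fin n, if (k : ℕ) ≤ min (i : ℕ) j then d k else 0 := by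
        rw [mul_apply]
        simp only [mul_diagonal, transpose_apply, upperOnes, of_apply]
        refine Finset.sum_congr rfl fun k _ => ?_
        split_ifs <;> first | omega | ring
    _ = ∑ k ∈ Finset.range n, if k ≤ min (i : ℕ) j then d k else 0 :=
        Fin.sum_univ_eq_sum_range (fun k => if k ≤ min (i : ℕ) j then d k else 0) n
    _ = _ := by
        rw [← Finset.sum_filter]
        congr 1
        ext k
        simp only [Finset.mem_filter, Finset.mem_range]
        omega

theorem abs_forwardDiff (i k : Fin n) :
    |forwardDiff n i k| = (if (k : ℕ) = i then 1 else 0) + if (k : ℕ) = i + 1 then 1 else 0 := by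
  simp only [forwardDiff, of_apply]
  split_ifs <;> first | omega | norm_num

theorem sum_abs_forwardDiff_le (k : Fin n) :
    ∑ j, |forwardDiff n j k| ≤ if (k : ℕ) = 0 then 1 else 2 := by
  have hcol : ∀ j : Fin n, |forwardDiff n j k| = (if (j : ℕ) = k then 1 else 0) +
      if (j : ℕ) = k - 1 then (if (k : ℕ) = 0 then 0 else 1) else 0 := fun j => by
    simp only [forwardDiff, of_apply]
    split_ifs <;> first | omega | norm_num
  rw [Finset.sum_congr rfl fun j _ => hcol j, Finset.sum_add_distrib,
    sum_fin_ite_val_eq _ (fun _ => 1), sum_fin_ite_val_eq _ (fun _ => if (k : ℕ) = 0 then 0 else 1)]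
  split_ifs <;> first | omega | norm_num

theorem sum_abs_forwardDiff_mul_diagonal_mul_transpose_le {e : ℕ → ℝ} (he : ∀ k, 0 ≤ e k)
    (i : Fin n) :
    ∑ j, |(forwardDiff n * diagonal (fun k : Fin n => e k) * (forwardDiff n)ᵀ) i j| ≤
      (if (i : ℕ) = 0 then 1 else 2) * e i + 2 * e (i + 1) := by
  set C := forwardDiff n
  have hentry : ∀ j, |(C * diagonal (fun k : Fin n => e k) * Cᵀ) i j| ≤
      ∑ k, |C i k| * e k * |C j k| := fun j => by
    rw [mul_apply]
    simp only [mul_diagonal, transpose_apply]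
    refine (Finset.abs_sum_le_sum_abs _ _).trans_eq (Finset.sum_congr rfl fun k _ => ?_)
    rw [abs_mul, abs_mul, abs_of_nonneg (he k)]
  calc _ ≤ ∑ j, ∑ k, |C i k| * e k * |C j k| := Finset.sum_le_sum fun j _ => hentry j
    _ = ∑ k, |C i k| * e k * ∑ j, |C j k| := by
        rw [Finset.sum_comm]
        simp_rw [Finset.mul_sum]
    _ ≤ ∑ k, |C i k| * e k * (if (k : ℕ) = 0 then 1 else 2) := by
        gcongr with k
        · exact mul_nonneg (abs_nonneg _) (he k)
        · exact sum_abs_forwardDiff_le k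
    _ = (if (i : ℕ) = 0 then 1 else 2) * e i + if (i : ℕ) + 1 < n then 2 * e (i + 1) else 0 := by
        simp only [C, abs_forwardDiff, add_mul, ite_mul, one_mul, zero_mul, Finset.sum_add_distrib]
        rw [sum_fin_ite_val_eq _ (fun k => e k * if k = 0 then 1 else 2),
          sum_fin_ite_val_eq _ (fun k => e k * if k = 0 then 1 else 2)]
        simp only [i.isLt, if_true, Nat.add_one_ne_zero, if_false]
        split_ifs <;> ring
    _ ≤ _ := by
        split_ifs <;> linarith [he (i + 1)]

end Bidiagonal

section Densities
variable {n : ℕ} {ρ : Fin n → ℝ}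

/-- `alphaSeq n ρ k` is the paper's `α_{n,k}` in its 1-based indexing, i.e.
`alphaSeq n ρ (i + 1) = alphaN n ρ i`, extended by `α_{n,0} = 0` and by `1` beyond `k = n`. -/
noncomputable def alphaSeq (n : ℕ) (ρ : Fin n → ℝ) : ℕ → ℝ
  | 0 => 0
  | k + 1 => if hk : k < n then alphaN n ρ ⟨k, hk⟩ else 1

noncomputable def alphaGap (n : ℕ) (ρ : Fin n → ℝ) (k : ℕ) : ℝ :=
  alphaSeq n ρ (k + 1) - alphaSeq n ρ k

theorem alphaSeq_succ {k : ℕ} (hk : k < n) : alphaSeq n ρ (k + 1) = alphaN n ρ ⟨k, hk⟩ :=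
  dif_pos hk

theorem alphaSeq_succ_eq_one {k : ℕ} (hk : n ≤ k + 1) : alphaSeq n ρ (k + 1) = 1 := by
  simp only [alphaSeq]
  split_ifs with hkn
  · simp [alphaN, alpha, Fin.lt_def]
    omega
  · rfl

theorem alphaGap_zero (hn : 0 < n) : alphaGap n ρ 0 = alphaN n ρ ⟨0, hn⟩ := by
  rw [alphaGap, alphaSeq_succ hn, alphaSeq, sub_zero]

theorem alphaGap_succ {k : ℕ} (hk : k + 1 < n) :
    alphaGap n ρ (k + 1) = alphaN n ρ ⟨k + 1, hk⟩ - alphaN n ρ ⟨k, by omega⟩ := by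
  rw [alphaGap, alphaSeq_succ hk, alphaSeq_succ]

theorem alphaGap_eq_zero {k : ℕ} (hk : n ≤ k + 1) : alphaGap n ρ (k + 1) = 0 := by
  rw [alphaGap, alphaSeq_succ_eq_one hk, alphaSeq_succ_eq_one (by omega), sub_self]

theorem alphaN_eq_div (hρ : ∀ i, ρ i ≠ 0) (i : Fin n) :
    alphaN n ρ i = ρ i / ρ ⟨n - 1, Nat.sub_one_lt_of_lt i.isLt⟩ := by
  rw [alphaN, dif_pos (Nat.sub_one_lt_of_lt i.isLt), alpha]
  split_ifs with hi
  · rfl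
  · have : i = ⟨n - 1, Nat.sub_one_lt_of_lt i.isLt⟩ :=
      Fin.ext (by simp only [Fin.lt_def] at hi ⊢; omega)
    rw [← this, div_self (hρ i)]

theorem alphaN_pos (hρ : ∀ i, 0 < ρ i) (i : Fin n) : 0 < alphaN n ρ i := by
  rw [alphaN_eq_div fun i => (hρ i).ne']
  exact div_pos (hρ _) (hρ _)

theorem Delta_mul_Gam_apply (hρ : ∀ i, ρ i ≠ 0) (i j : Fin n) :
    (Delta n ρ * Gam n ρ) i j = alphaN n ρ (min i j) := by
  rw [Delta, Gam, diagonal_mul, of_apply, alpha]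
  split_ifs with hji
  · rw [min_eq_right hji.le, alphaN_eq_div hρ, alphaN_eq_div hρ]
    field_simp [hρ i]
  · rw [min_eq_left (not_lt.mp hji), mul_one]

theorem Delta_mul_Gam_eq (hρ : ∀ i, ρ i ≠ 0) :
    Delta n ρ * Gam n ρ =
      (upperOnes n)ᵀ * diagonal (fun k : Fin n => alphaGap n ρ k) * upperOnes n := by
  ext i j
  rw [Delta_mul_Gam_apply hρ, upperOnes_transpose_mul_diagonal_mul_apply]
  simp only [alphaGap]
  rw [Finset.sum_range_sub, ← Fin.coe_min, alphaSeq_succ (min i j).isLt]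
  simp only [alphaSeq, sub_zero, Fin.eta]

theorem rho_lt_succ (hρ : ∀ i, 0 < ρ i) (hγ : ∀ i : Fin (n - 1), 0 < gam n ρ i ∧ gam n ρ i < 1)
    {k : ℕ} (hk : k + 1 < n) : ρ ⟨k, by omega⟩ < ρ ⟨k + 1, hk⟩ := by
  have h := (hγ ⟨k, by omega⟩).2
  rwa [gam, div_lt_one (hρ _)] at h

theorem alphaGap_pos (hρ : ∀ i, 0 < ρ i) (hγ : ∀ i : Fin (n - 1), 0 < gam n ρ i ∧ gam n ρ i < 1)
    {k : ℕ} (hk : k < n) : 0 < alphaGap n ρ k := by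
  have hρ' : ∀ i, ρ i ≠ 0 := fun i => (hρ i).ne'
  rcases k with _ | k
  · rw [alphaGap_zero hk]
    exact alphaN_pos hρ _
  · rw [alphaGap_succ hk, alphaN_eq_div hρ', alphaN_eq_div hρ', ← sub_div]
    exact div_pos (sub_pos.mpr (rho_lt_succ hρ hγ hk)) (hρ _)

theorem alphaGap_nonneg (hn : 0 < n) (hρ : ∀ i, 0 < ρ i)
    (hγ : ∀ i : Fin (n - 1), 0 < gam n ρ i ∧ gam n ρ i < 1) (k : ℕ) : 0 ≤ alphaGap n ρ k := by
  rcases lt_or_ge k n with hk | hk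
  · exact (alphaGap_pos hρ hγ hk).le
  · obtain ⟨j, rfl⟩ := Nat.exists_eq_add_one_of_ne_zero (by omega : k ≠ 0)
    rw [alphaGap_eq_zero hk]

theorem pden_eq (k : ℕ) : pden n ρ k = (alphaGap n ρ (k + 1))⁻¹ := by
  rw [pden]
  split_ifs with hk
  · rw [alphaGap_succ hk, one_div]
  · rw [alphaGap_eq_zero (by omega), _root_.inv_zero]

end Densities

section Bound
variable {n : ℕ} {ρ : Fin n → ℝ}

theorem inv_alphaGap_zero_add_le_aval (hn : 2 ≤ n) (hρ : ∀ i, 0 < ρ i)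
    (hγ : ∀ i : Fin (n - 1), 0 < gam n ρ i ∧ gam n ρ i < 1) (h : Fin n → ℝ) :
    (alphaGap n ρ 0)⁻¹ + 2 * (alphaGap n ρ 1)⁻¹ ≤ aval n hn ρ h := by
  refine le_trans (le_of_eq ?_) ((le_max_left _ _).trans (le_max_left _ _))
  have hgap0 := alphaGap_pos hρ hγ (by omega : 0 < n)
  have hgap1 := alphaGap_pos hρ hγ (by omega : 1 < n)
  rw [alphaGap_zero (by omega)] at hgap0
  rw [alphaGap_succ (by omega)] at hgap1
  rw [pden_eq, alphaGap_zero (by omega), alphaGap_succ (by omega)]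
  field_simp
  ring

theorem inv_alphaGap_add_le_aval (hn : 2 ≤ n) (h : Fin n → ℝ) (k : Fin (n - 2)) :
    2 * ((alphaGap n ρ (k + 1))⁻¹ + (alphaGap n ρ (k + 2))⁻¹) ≤ aval n hn ρ h := by
  have hk : 2 * (pden n ρ k + pden n ρ (k + 1)) ≤ aval n hn ρ h :=
    ((le_ciSup (Set.finite_range fun k : Fin (n - 2) => 2 * (pden n ρ k + pden n ρ (k + 1))).bddAbove
      k).trans (le_max_right _ _)).trans (le_max_left _ _)
  rwa [pden_eq, pden_eq] at hk

theorem inv_alphaN_mul_le_aval (hn : 2 ≤ n) (h : Fin n → ℝ) (i : Fin n) :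
    (alphaN n ρ i * h i)⁻¹ ≤ aval n hn ρ h :=
  (le_ciSup (Set.finite_range fun i => (alphaN n ρ i * h i)⁻¹).bddAbove i).trans (le_max_right _ _)

/-- In the last row `alphaGap n ρ n = 0`, so its inverse is the junk value `0`, matching the
missing `p_n`. -/
theorem rowBound_le_aval (hn : 2 ≤ n) (hρ : ∀ i, 0 < ρ i)
    (hγ : ∀ i : Fin (n - 1), 0 < gam n ρ i ∧ gam n ρ i < 1) (h : Fin n → ℝ) (i : Fin n) :
    (if (i : ℕ) = 0 then 1 else 2) * (alphaGap n ρ i)⁻¹ + 2 * (alphaGap n ρ (i + 1))⁻¹ ≤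
      aval n hn ρ h := by
  have he : ∀ k, 0 ≤ (alphaGap n ρ k)⁻¹ := fun k =>
    inv_nonneg.mpr (alphaGap_nonneg (by omega) hρ hγ k)
  obtain ⟨_ | j, hj⟩ := i
  · simpa using inv_alphaGap_zero_add_le_aval hn hρ hγ h
  · simp only [Nat.add_one_ne_zero, if_false]
    rcases lt_or_ge (j + 2) n with hjn | hjn
    · have := inv_alphaGap_add_le_aval hn h (ρ := ρ) ⟨j, by omega⟩
      simp only at this
      linarith
    · rw [alphaGap_eq_zero hjn, _root_.inv_zero]
      rcases lt_or_ge n 3 with hn3 | hn3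
      · obtain rfl : j = 0 := by omega
        linarith [inv_alphaGap_zero_add_le_aval hn hρ hγ h, he 0]
      · have := inv_alphaGap_add_le_aval hn h (ρ := ρ) ⟨j - 1, by omega⟩
        simp only [show j - 1 + 1 = j by omega, show j - 1 + 2 = j + 1 by omega] at this
        linarith [he j]

end Bound

section Stiffness
variable {n : ℕ} {ρ : Fin n → ℝ}

theorem S0_eq (h : Fin n → ℝ) :
    S0 n ρ h = fromBlocks (Delta n ρ * Gam n ρ) 0 0
      (fromBlocks (diagonal fun i => alphaN n ρ i * h i) 0 0
        (diagonal fun i => alphaN n ρ i * h i)) := by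
  rw [S0, blk3, fromCols_zero, fromRows_zero, Delta, diagonal_mul_diagonal]

theorem Delta_mul_Gam_posDef (hρ : ∀ i, 0 < ρ i)
    (hγ : ∀ i : Fin (n - 1), 0 < gam n ρ i ∧ gam n ρ i < 1) : (Delta n ρ * Gam n ρ).PosDef := by
  rw [Delta_mul_Gam_eq fun i => (hρ i).ne', ← conjTranspose_eq_transpose_of_trivial]
  refine (PosDef.diagonal fun k => alphaGap_pos hρ hγ k.isLt).conjTranspose_mul_mul_same ?_
  refine Function.LeftInverse.injective (g := (forwardDiff n *ᵥ ·)) fun x => ?_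
  simp only [mulVec_mulVec, forwardDiff_mul_upperOnes, one_mulVec]

theorem inv_Delta_mul_Gam (hρ : ∀ i, 0 < ρ i)
    (hγ : ∀ i : Fin (n - 1), 0 < gam n ρ i ∧ gam n ρ i < 1) :
    (Delta n ρ * Gam n ρ)⁻¹ =
      forwardDiff n * diagonal (fun k : Fin n => (alphaGap n ρ k)⁻¹) * (forwardDiff n)ᵀ := by
  rw [Delta_mul_Gam_eq fun i => (hρ i).ne']
  refine inv_transpose_mul_mul_eq forwardDiff_mul_upperOnes ?_
  rw [diagonal_mul_diagonal, ← diagonal_one]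
  exact congrArg diagonal (funext fun k => mul_inv_cancel₀ (alphaGap_pos hρ hγ k.isLt).ne')

theorem posDef_diagonal_alphaN_mul (hρ : ∀ i, 0 < ρ i) {h : Fin n → ℝ} (hh : ∀ i, 0 < h i) :
    (diagonal fun i => alphaN n ρ i * h i).PosDef :=
  .diagonal fun i => mul_pos (alphaN_pos hρ i) (hh i)

theorem S0_posDef (hρ : ∀ i, 0 < ρ i) (h : Fin n → ℝ) (hh : ∀ i, 0 < h i)
    (hγ : ∀ i : Fin (n - 1), 0 < gam n ρ i ∧ gam n ρ i < 1) : (S0 n ρ h).PosDef := by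
  have hE := posDef_diagonal_alphaN_mul hρ hh
  rw [S0_eq]
  exact (Delta_mul_Gam_posDef hρ hγ).fromBlocks_zero (hE.fromBlocks_zero hE)

theorem dotProduct_inv_S0_mulVec_le (hn : 2 ≤ n) (hρ : ∀ i, 0 < ρ i) (h : Fin n → ℝ)
    (hh : ∀ i, 0 < h i) (hγ : ∀ i : Fin (n - 1), 0 < gam n ρ i ∧ gam n ρ i < 1)
    (x : Fin n ⊕ Fin n ⊕ Fin n → ℝ) :
    x ⬝ᵥ (S0 n ρ h)⁻¹ *ᵥ x ≤ aval n hn ρ h * (x ⬝ᵥ x) := by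
  have hE := posDef_diagonal_alphaN_mul hρ hh
  have hsymm : (forwardDiff n * diagonal (fun k : Fin n => (alphaGap n ρ k)⁻¹) *
      (forwardDiff n)ᵀ).IsSymm := by
    simp [IsSymm, transpose_mul, Matrix.mul_assoc]
  have hEinv : ∀ y : Fin n → ℝ, y ⬝ᵥ (diagonal fun i => alphaN n ρ i * h i)⁻¹ *ᵥ y ≤
      aval n hn ρ h * (y ⬝ᵥ y) := by
    rw [inv_diagonal_of_ne_zero fun i => (mul_pos (alphaN_pos hρ i) (hh i)).ne']
    exact dotProduct_diagonal_mulVec_le (inv_alphaN_mul_le_aval hn h)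
  rw [S0_eq, inv_fromBlocks_zero (Delta_mul_Gam_posDef hρ hγ).isUnit
    (hE.fromBlocks_zero hE).isUnit, inv_fromBlocks_zero hE.isUnit hE.isUnit, inv_Delta_mul_Gam hρ hγ]
  refine dotProduct_fromBlocks_zero_mulVec_le (hsymm.dotProduct_mulVec_le_of_sum_abs_le fun i => ?_)
    (dotProduct_fromBlocks_zero_mulVec_le hEinv hEinv) x
  exact (sum_abs_forwardDiff_mul_diagonal_mul_transpose_le
    (fun k => inv_nonneg.mpr (alphaGap_nonneg (by omega) hρ hγ k)) i).trans
    (rowBound_le_aval hn hρ hγ h i)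

end Stiffness

theorem stmt6 (n : ℕ) (hn : 2 ≤ n) (ρ : Fin n → ℝ) (hρ : ∀ i, 0 < ρ i)
    (h : Fin n → ℝ) (hh : ∀ i, 0 < h i)
    (hγ : ∀ i : Fin (n - 1), 0 < gam n ρ i ∧ gam n ρ i < 1) :
    (S0 n ρ h).PosDef ∧
    lamMax ((S0 n ρ h)⁻¹) ≤ aval n hn ρ h ∧
    1 / aval n hn ρ h ≤ lamMin (S0 n ρ h) := by
  have hS := S0_posDef hρ h hh hγ
  have ha : 0 < aval n hn ρ h :=
    (inv_pos.mpr (mul_pos (alphaN_pos hρ ⟨0, by omega⟩) (hh _))).trans_le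
      (inv_alphaN_mul_le_aval hn h _)
  have hinv := dotProduct_inv_S0_mulVec_le hn hρ h hh hγ
  have : Nonempty (Fin n ⊕ Fin n ⊕ Fin n) := ⟨.inl ⟨0, by omega⟩⟩
  refine ⟨hS, lamMax_le ha.le hinv, le_lamMin fun x => ?_⟩
  rw [one_div, inv_mul_le_iff₀ ha]
  exact hS.dotProduct_le_mul_dotProduct_mulVec ha hinv x

end MLSW6
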